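/- Let λ be a partition of n, let j ≥ 0, and let m be a positive integer. Then the map μ ↦ 1μ from {partitions of n+j with exactly m parts, not subpartitions of 1^j λ} to {partitions of n+j+1 with exactly m+1 parts, not subpartitions of 1^{j+1} λ} is injective, and it is surjective (hence a bijection) whenever n + j ≥ 2(n + j − m), i.e., m ≥ (n+j)/2. -/
import Mathlib


/-- `Subpartition μ ν` : `μ` is obtained from `ν` by merging (adding together)
groups of parts of `ν`. `P` is the grouping of the parts of `ν`. -/
def Subpartition (μ ν : Multiset ℕ) : Prop :=
  ∃ P : Multiset (Multiset ℕ), (∀ m ∈ P, m ≠ 0) ∧ P.join = ν ∧ P.map Multiset.sum = μ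

/-- `1^j λ` : the partition of `n + j` obtained from `λ` by adjoining `j` parts equal to `1`. -/
def onePow {n : ℕ} (j : ℕ) (lam : Nat.Partition n) : Nat.Partition (n + j) where
  parts := Multiset.replicate j 1 + lam.parts
  parts_pos := by
    intro i hi
    rcases Multiset.mem_add.1 hi with h | h
    · rw [Multiset.eq_of_mem_replicate h]; norm_num
    · exact lam.parts_pos h
  parts_sum := by
    rw [Multiset.sum_add, Multiset.sum_replicate, lam.parts_sum, smul_eq_mul, mul_one]
    omega

lemma onePow_succ_parts {n : ℕ} (j : ℕ) (lam : Nat.Partition n) :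
    (onePow (j + 1) lam).parts = 1 ::ₘ (onePow j lam).parts := by
  simp [onePow, Multiset.replicate_succ, Multiset.cons_add]

lemma sub_cons {μ ν : Multiset ℕ} (h : Subpartition μ ν) :
    Subpartition (1 ::ₘ μ) (1 ::ₘ ν) := by
  obtain ⟨P, h0, hj, hs⟩ := h
  refine ⟨({1} : Multiset ℕ) ::ₘ P, ?_, ?_, ?_⟩
  · intro b hb
    rcases Multiset.mem_cons.1 hb with rfl | hb
    · simp
    · exact h0 b hb
  · simp [Multiset.join, hj, Multiset.join] at *
    simpa [Multiset.join] using congrArg (fun t => (1 : ℕ) ::ₘ t) hj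
  · simp [hs]

lemma sub_of_sub_cons {μ ν : Multiset ℕ} (hν : ∀ x ∈ ν, 0 < x)
    (h : Subpartition (1 ::ₘ μ) (1 ::ₘ ν)) : Subpartition μ ν := by
  obtain ⟨P, h0, hj, hs⟩ := h
  have h1 : (1 : ℕ) ∈ P.map Multiset.sum := by rw [hs]; exact Multiset.mem_cons_self _ _
  obtain ⟨b, hbP, hbsum⟩ := Multiset.mem_map.1 h1
  -- every element of b is positive
  have hpos : ∀ x ∈ b, 0 < x := by
    intro x hx
    have : x ∈ P.join := Multiset.mem_join.2 ⟨b, hbP, hx⟩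
    rw [hj] at this
    rcases Multiset.mem_cons.1 this with rfl | hx'
    · norm_num
    · exact hν x hx'
  have hb1 : b = {1} := by
    rcases Multiset.exists_mem_of_ne_zero (h0 b hbP) with ⟨x, hx⟩
    obtain ⟨b', rfl⟩ := Multiset.exists_cons_of_mem hx
    have hx1 : 0 < x := hpos x (Multiset.mem_cons_self _ _)
    have hsum : x + b'.sum = 1 := by simpa using hbsum
    have hx' : x = 1 := by omega
    have hb'0 : b'.sum = 0 := by omega
    have : b' = 0 := by
      by_contra hne
      obtain ⟨y, hy⟩ := Multiset.exists_mem_of_ne_zero hne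
      exact absurd (Multiset.single_le_sum (fun z _ => Nat.zero_le z) y hy)
        (by have := hpos y (Multiset.mem_cons_of_mem hy); omega)
    simp [hx', this]
  obtain ⟨Q, rfl⟩ := Multiset.exists_cons_of_mem hbP
  refine ⟨Q, fun c hc => h0 c (Multiset.mem_cons_of_mem hc), ?_, ?_⟩
  · have : b + Q.join = 1 ::ₘ ν := by simpa [Multiset.join] using hj
    rw [hb1] at this
    have : (1 : ℕ) ::ₘ Q.join = 1 ::ₘ ν := by simpa [Multiset.singleton_add] using this
    exact (Multiset.cons_inj_right _).1 this
  · have : b.sum ::ₘ Q.map Multiset.sum = 1 ::ₘ μ := by simpa using hs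
    rw [hbsum] at this
    exact (Multiset.cons_inj_right _).1 this

/-- The map `μ ↦ 1μ`, from partitions of `n+j` with exactly `m` parts that are not
subpartitions of `1^j λ`, to partitions of `n+j+1` with exactly `m+1` parts that are
not subpartitions of `1^{j+1} λ`, is well defined and injective for all `m`, and is
surjective whenever `n + j ≤ 2m`. -/
theorem stmt10 {n : ℕ} (lam : Nat.Partition n) (j m : ℕ) :
    (∀ μ : Nat.Partition (n + j),
      Multiset.card μ.parts = m → ¬ Subpartition μ.parts (onePow j lam).parts →
      Multiset.card (1 ::ₘ μ.parts) = m + 1 ∧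
        ¬ Subpartition (1 ::ₘ μ.parts) (onePow (j + 1) lam).parts) ∧
    (∀ μ₁ μ₂ : Nat.Partition (n + j),
      (Multiset.card μ₁.parts = m ∧ ¬ Subpartition μ₁.parts (onePow j lam).parts) →
      (Multiset.card μ₂.parts = m ∧ ¬ Subpartition μ₂.parts (onePow j lam).parts) →
      1 ::ₘ μ₁.parts = 1 ::ₘ μ₂.parts → μ₁ = μ₂) ∧
    (n + j ≤ 2 * m →
      ∀ ν : Nat.Partition (n + j + 1),
        Multiset.card ν.parts = m + 1 → ¬ Subpartition ν.parts (onePow (j + 1) lam).parts →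
        ∃ μ : Nat.Partition (n + j),
          Multiset.card μ.parts = m ∧ ¬ Subpartition μ.parts (onePow j lam).parts ∧
            1 ::ₘ μ.parts = ν.parts) := by
  refine ⟨?_, ?_, ?_⟩
  · intro μ hc hns
    refine ⟨by simp [hc], ?_⟩
    rw [onePow_succ_parts]
    intro h
    exact hns (sub_of_sub_cons (fun x hx => (onePow j lam).parts_pos hx) h)
  · intro μ₁ μ₂ _ _ h
    have := (Multiset.cons_inj_right _).1 h
    exact Nat.Partition.ext this
  · intro hm ν hc hns
    have h1 : (1 : ℕ) ∈ ν.parts := by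
      by_contra h1
      have h2 : ∀ x ∈ ν.parts, 2 ≤ x := by
        intro x hx
        have := ν.parts_pos hx
        have hx1 : x ≠ 1 := fun e => h1 (e ▸ hx)
        omega
      have : 2 * Multiset.card ν.parts ≤ ν.parts.sum := by
        calc 2 * Multiset.card ν.parts = (ν.parts.map (fun _ => 2)).sum := by
              simp [mul_comm]
          _ ≤ (ν.parts.map id).sum :=
              Multiset.sum_map_le_sum_map _ _ (fun x hx => h2 x hx)
          _ = ν.parts.sum := by simp
      rw [ν.parts_sum, hc] at this
      omega
    set μp := ν.parts.erase 1 with hμp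
    have hcons : (1 : ℕ) ::ₘ μp = ν.parts := Multiset.cons_erase h1
    have hsum : μp.sum = n + j := by
      have : (1 ::ₘ μp).sum = n + j + 1 := by rw [hcons]; exact ν.parts_sum
      simp at this; omega
    refine ⟨⟨μp, fun {x} hx => ν.parts_pos (by rw [← hcons]; exact Multiset.mem_cons_of_mem hx),
      hsum⟩, ?_, ?_, hcons⟩
    · have : Multiset.card (1 ::ₘ μp) = m + 1 := by rw [hcons]; exact hc
      simpa using this
    · intro h
      apply hns
      rw [← hcons, onePow_succ_parts]
      exact sub_cons h
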